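/- Let m, n be relatively prime positive integers and let i ∈ M(α₁,α₂) be a cyclically irreducible sequence of length m+n (with m ones and n twos). If a cyclic shift by k with 0 < k < m+n fixes i, then a contradiction arises; i.e., the cyclic shift action of ℤ/(m+n) on the set of cyclically irreducible sequences is free. -/
import Mathlib

def wsum (α₁ α₂ : ℂ) (l : List Bool) : ℂ :=
  (l.map (fun b => if b then α₂ else α₁)).sum

def CycRed (α₁ α₂ : ℂ) (l : List Bool) : Prop :=
  ∃ (k : ℕ) (a b : List Bool), a ≠ [] ∧ b ≠ [] ∧
    wsum α₁ α₂ a = 0 ∧ wsum α₁ α₂ b = 0 ∧ l.rotate k = a ++ b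

lemma wsum_append (α₁ α₂ : ℂ) (a b : List Bool) :
    wsum α₁ α₂ (a ++ b) = wsum α₁ α₂ a + wsum α₁ α₂ b := by
  simp [wsum]

lemma count_false_add_count_true : ∀ l : List Bool, l.count false + l.count true = l.length := by
  intro l
  induction l with
  | nil => simp
  | cons b t ih => cases b <;> simp [List.count_cons] <;> omega

lemma wsum_count (α₁ α₂ : ℂ) (l : List Bool) :
    wsum α₁ α₂ l = (l.count false : ℂ) * α₁ + (l.count true : ℂ) * α₂ := by
  induction l with
  | nil => simp [wsum]
  | cons b t ih =>
    cases b <;> simp [wsum, List.count_cons] at ih ⊢ <;> rw [ih] <;> push_cast <;> ring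

lemma comm_wsum (α₁ α₂ : ℂ) : ∀ N (a b : List Bool), a.length + b.length ≤ N →
    a ++ b = b ++ a →
    (b.length : ℂ) * wsum α₁ α₂ a = (a.length : ℂ) * wsum α₁ α₂ b := by
  intro N
  induction N with
  | zero =>
    intro a b hlen _
    have ha : a = [] := by
      cases a with
      | nil => rfl
      | cons x t => simp at hlen
    subst ha; simp [wsum]
  | succ N ih =>
    have key : ∀ a b : List Bool, a.length + b.length ≤ N + 1 → a.length ≤ b.length →
        a ++ b = b ++ a →
        (b.length : ℂ) * wsum α₁ α₂ a = (a.length : ℂ) * wsum α₁ α₂ b := by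
      intro a b hlen hab h
      cases a with
      | nil => simp [wsum]
      | cons x t =>
        set a := x :: t with ha
        have hta : a = b.take a.length := by
          have := congrArg (List.take a.length) h
          rwa [List.take_left, List.take_append_of_le_length hab] at this
        set c := b.drop a.length with hc
        have hb : b = a ++ c := by
          conv_lhs => rw [← List.take_append_drop a.length b, ← hta]
        have hac : a ++ c = c ++ a := by
          rw [hb, List.append_assoc] at h
          exact List.append_cancel_left h
        have hclen : a.length + c.length ≤ N := by
          have h1 : c.length = b.length - a.length := by
            simp [hc]
          have h2 : 1 ≤ a.length := by simp [ha]
          omega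
        have ih' := ih a c hclen hac
        have hblen : (b.length : ℂ) = a.length + c.length := by
          rw [hb]; push_cast [List.length_append]; ring
        rw [hb, wsum_append]
        push_cast [List.length_append]
        linear_combination ih'
    intro a b hlen h
    rcases le_total a.length b.length with hab | hab
    · exact key a b hlen hab h
    · exact (key b a (by omega) hab h.symm).symm

theorem stmt11 (α₁ α₂ : ℂ) (hα₁ : α₁ ≠ 0) (hα₂ : α₂ ≠ 0)
    (m n : ℕ) (hm : 0 < m) (hn : 0 < n) (hco : Nat.Coprime m n)
    (hmn : (m : ℂ) * α₁ + (n : ℂ) * α₂ = 0)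
    (l : List Bool) (hl : l ≠ []) (hM : wsum α₁ α₂ l = 0)
    (hirr : ¬ CycRed α₁ α₂ l)
    (k : ℕ) (hk0 : 0 < k) (hk : k < m + n) (hfix : l.rotate k = l) :
    False := by
  set L := l.length with hL
  have hL0 : 0 < L := List.length_pos_iff.mpr hl
  -- counting: L = (m+n) * t for some t ≥ 1, so L ≥ m + n
  set p := l.count false with hp
  set q := l.count true with hq
  have hpq : p + q = L := count_false_add_count_true l
  have hw := wsum_count α₁ α₂ l
  rw [hM] at hw
  -- (n*p - q*m) * α₁ = 0
  have hnp : (n : ℂ) * p = (q : ℂ) * m := by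
    have h1 : ((n : ℂ) * p - (q : ℂ) * m) * α₁ = 0 := by
      linear_combination (n:ℂ) * hw.symm - (q:ℂ) * hmn
    rcases mul_eq_zero.mp h1 with h | h
    · linear_combination h
    · exact absurd h hα₁
  have hnpN : n * p = q * m := by
    exact_mod_cast hnp
  have hmp : m ∣ p := hco.dvd_of_dvd_mul_left
    ⟨q, by rw [hnpN, Nat.mul_comm]⟩
  obtain ⟨t, ht⟩ := hmp
  have hqt : q = n * t := by
    have h1 : n * t * m = q * m := by
      rw [show n * t * m = n * (m * t) by ring, ← ht]; exact hnpN
    exact (Nat.eq_of_mul_eq_mul_right hm h1).symm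
  have ht1 : 1 ≤ t := by
    by_contra h
    have : t = 0 := by omega
    subst this
    simp at ht hqt
    omega
  have hLmn : m + n ≤ L := by
    have h2 : L = (m + n) * t := by rw [Nat.add_mul]; omega
    rw [h2]
    exact Nat.le_mul_of_pos_right _ ht1
  -- rotation by multiples of k
  have hrotj : ∀ j, l.rotate (j * k) = l := by
    intro j
    induction j with
    | zero => simp
    | succ j ihj =>
      have : (j + 1) * k = j * k + k := by ring
      rw [this, ← List.rotate_rotate, ihj, hfix]
  -- rotate by d = gcd k L fixes l
  set d := Nat.gcd k L with hd
  have hd0 : 0 < d := Nat.gcd_pos_of_pos_left _ hk0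
  have hdk : d ≤ k := Nat.le_of_dvd hk0 (Nat.gcd_dvd_left k L)
  have hdL : d < L := by omega
  -- Bezout
  have hbez : (d : ℤ) = k * Nat.gcdA k L + L * Nat.gcdB k L := Nat.gcd_eq_gcd_ab k L
  set x := Nat.gcdA k L with hx
  set j := (x % L).toNat with hj
  have hjx : (j : ℤ) = x % (L : ℤ) := Int.toNat_of_nonneg (Int.emod_nonneg x (by exact_mod_cast hL0.ne'))
  have hjk : (j * k) % L = d := by
    have h1 : ((j * k : ℕ) : ℤ) % (L : ℤ) = (d : ℤ) % L := by
      push_cast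
      rw [hjx]
      calc (x % L) * k % (L:ℤ) = x * k % L := by
            rw [Int.mul_emod, Int.emod_emod_of_dvd _ dvd_rfl, ← Int.mul_emod]
        _ = (d : ℤ) % L := by
            rw [hbez, Int.add_mul_emod_self_left, mul_comm]
    have h2 : (d : ℤ) % L = d := Int.emod_eq_of_lt (by positivity) (by exact_mod_cast hdL)
    rw [h2] at h1
    have := Int.natCast_mod (j * k) L
    omega
  have hrotd : l.rotate d = l := by
    rw [← hjk, hL, List.rotate_mod, hrotj]
  -- decompose
  set a := l.take d with ha
  set b := l.drop d with hb
  have hab1 : a ++ b = l := List.take_append_drop d l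
  have hab2 : b ++ a = l := by
    rw [← hrotd, List.rotate_eq_drop_append_take (by omega : d ≤ l.length)]
  have hcomm : a ++ b = b ++ a := by rw [hab1, hab2]
  have hla : a.length = d := by rw [ha, List.length_take]; omega
  have hlb : b.length = L - d := by rw [hb, List.length_drop]
  have hsum : wsum α₁ α₂ a + wsum α₁ α₂ b = 0 := by
    rw [← wsum_append, hab1, hM]
  have hkey := comm_wsum α₁ α₂ (a.length + b.length) a b le_rfl hcomm
  have hwa : wsum α₁ α₂ a = 0 := by
    have hL' : ((a.length : ℂ) + b.length) ≠ 0 := by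
      have : a.length + b.length = L := by omega
      rw [← Nat.cast_add, this]
      exact_mod_cast hL0.ne'
    have : ((a.length : ℂ) + b.length) * wsum α₁ α₂ a = 0 := by
      linear_combination hkey + (a.length : ℂ) * hsum
    exact (mul_eq_zero.mp this).resolve_left hL'
  have hwb : wsum α₁ α₂ b = 0 := by linear_combination hsum - hwa
  exact hirr ⟨0, a, b, by rw [← List.length_pos_iff, hla]; omega,
    by rw [← List.length_pos_iff, hlb]; omega, hwa, hwb, by rw [List.rotate_zero, hab1]⟩
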